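/- arXiv:2305.06785 — 2 statements merged into one kernel-verified Lean document; each statement's English description precedes it below -/
import Mathlib

section
/- Let a, z, LB, UB be real numbers with LB ≤ a ≤ UB. Then z = max(0, a) if and only if there exists σ ∈ {0,1} such that a ≤ z, z ≤ a − (1 − σ)·LB, z ≤ σ·UB, and z ≥ 0. (Correctness of the big-M mixed-integer encoding of a single ReLU neuron.) -/
section BigM

variable {K : Type*} [Field K] [LinearOrder K] [IsStrictOrderedRing K]

def BigMReLU (LB UB a z σ : K) : Prop :=
  a ≤ z ∧ z ≤ a - (1 - σ) * LB ∧ z ≤ σ * UB ∧ 0 ≤ z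

variable {LB UB a z : K}

theorem bigMReLU_zero_iff : BigMReLU LB UB a z 0 ↔ z = 0 ∧ LB ≤ a ∧ a ≤ 0 := by
  unfold BigMReLU
  constructor
  · rintro ⟨haz, hzLB, hz0, h0z⟩
    have hz : z = 0 := by linarith
    exact ⟨hz, by linarith, by linarith⟩
  · rintro ⟨rfl, hLB, ha⟩
    refine ⟨ha, ?_, ?_, le_rfl⟩ <;> linarith

theorem bigMReLU_one_iff : BigMReLU LB UB a z 1 ↔ z = a ∧ 0 ≤ a ∧ a ≤ UB := by
  unfold BigMReLU
  constructor
  · rintro ⟨haz, hza, hzUB, h0z⟩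
    have hz : z = a := by linarith
    exact ⟨hz, by linarith, by linarith⟩
  · rintro ⟨rfl, h0z, hUB⟩
    refine ⟨le_rfl, ?_, ?_, h0z⟩ <;> linarith

end BigM

/-- Correctness of the big-M mixed-integer encoding of a single ReLU neuron:
for valid pre-activation bounds `LB ≤ a ≤ UB`, `z = max 0 a` iff there is a
binary `σ` with `a ≤ z`, `z ≤ a - (1 - σ) * LB`, `z ≤ σ * UB` and `z ≥ 0`. -/
theorem relu_bigM_correct (a z LB UB : ℝ) (hLB : LB ≤ a) (hUB : a ≤ UB) :
    z = max 0 a ↔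
      ∃ σ : ℝ, (σ = 0 ∨ σ = 1) ∧
        a ≤ z ∧ z ≤ a - (1 - σ) * LB ∧ z ≤ σ * UB ∧ 0 ≤ z := by
  change _ ↔ ∃ σ : ℝ, (σ = 0 ∨ σ = 1) ∧ BigMReLU LB UB a z σ
  simp only [or_and_right, exists_or, exists_eq_left, bigMReLU_zero_iff, bigMReLU_one_iff,
    eq_comm (a := z), max_eq_iff, hLB, hUB, true_and, and_true]
end

section
/- Let W be a real m×n matrix, b ∈ ℝ^m, x ∈ ℝ^n, and LB, UB ∈ ℝ^m be such that LB_i ≤ (Wx + b)_i ≤ UB_i for every i ∈ {1,…,m}. Then a vector z ∈ ℝ^m satisfies z_i = max(0, (Wx + b)_i) for all i if and only if there exists σ ∈ {0,1}^m such that for every i: (Wx + b)_i ≤ z_i, z_i ≤ (Wx + b)_i − (1 − σ_i)·LB_i, z_i ≤ σ_i·UB_i, and z_i ≥ 0. (Correctness of the componentwise big-M mixed-integer encoding of a fully connected ReLU layer.) -/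
/-!
The encoding decouples over neurons, so it suffices to treat one coordinate `a = (W x + b)_i`.
There `σ = 1` forces `z = a` and `σ = 0` forces `z = 0`, and the constraints
`a ≤ z`, `0 ≤ z` then say that the chosen branch is the active one of `max 0 a`; so every
solution of the encoding is the ReLU output. Conversely, the indicator `σ = [0 ≤ a]` together
with `z = max 0 a` satisfies the encoding, which is where `LB ≤ a ≤ UB` is needed.
-/

/-- Big-M constraints of one neuron: pre-activation `a`, indicator `s`, output `z`. -/
def IsBigMReLU (lb ub a s z : ℝ) : Prop :=
  (s = 0 ∨ s = 1) ∧ a ≤ z ∧ z ≤ a - (1 - s) * lb ∧ z ≤ s * ub ∧ 0 ≤ z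

theorem IsBigMReLU.eq_max {lb ub a s z : ℝ} (h : IsBigMReLU lb ub a s z) : z = max 0 a := by
  obtain ⟨hs | hs, h_ge, h_le, h_ub, h_nonneg⟩ := h <;> subst hs
  · have hz : z = 0 := le_antisymm (by simpa using h_ub) h_nonneg
    rw [hz, max_eq_left (hz ▸ h_ge)]
  · have hz : z = a := le_antisymm (by simpa using h_le) h_ge
    rw [hz, max_eq_right (hz ▸ h_nonneg)]

theorem isBigMReLU_max {lb ub a : ℝ} (hlb : lb ≤ a) (hub : a ≤ ub) :
    ∃ s, IsBigMReLU lb ub a s (max 0 a) := by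
  rcases le_total 0 a with ha | ha
  · refine ⟨1, Or.inr rfl, ?_, ?_, ?_, ?_⟩ <;> simp [hub, ha]
  · refine ⟨0, Or.inl rfl, ?_, ?_, ?_, ?_⟩ <;> simp [ha, hlb]

theorem eq_max_iff_exists_isBigMReLU {lb ub a z : ℝ} (hlb : lb ≤ a) (hub : a ≤ ub) :
    z = max 0 a ↔ ∃ s, IsBigMReLU lb ub a s z :=
  ⟨fun hz ↦ hz ▸ isBigMReLU_max hlb hub, fun ⟨_, hs⟩ ↦ hs.eq_max⟩

/-- Correctness of the componentwise big-M mixed-integer encoding of a fully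
connected ReLU layer `z = max(0, W x + b)` with valid pre-activation bounds
`LB_i ≤ (W x + b)_i ≤ UB_i`. -/
theorem relu_layer_bigM_correct (m n : ℕ) (W : Matrix (Fin m) (Fin n) ℝ)
    (b : Fin m → ℝ) (x : Fin n → ℝ) (LB UB : Fin m → ℝ)
    (hbounds : ∀ i, LB i ≤ (W.mulVec x + b) i ∧ (W.mulVec x + b) i ≤ UB i)
    (z : Fin m → ℝ) :
    (∀ i, z i = max 0 ((W.mulVec x + b) i)) ↔
      ∃ σ : Fin m → ℝ, ∀ i,
        (σ i = 0 ∨ σ i = 1) ∧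
        (W.mulVec x + b) i ≤ z i ∧
        z i ≤ (W.mulVec x + b) i - (1 - σ i) * LB i ∧
        z i ≤ σ i * UB i ∧ 0 ≤ z i :=
  (forall_congr' fun i ↦ eq_max_iff_exists_isBigMReLU (hbounds i).1 (hbounds i).2).trans
    Classical.skolem
end
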